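/- For every n > 1, the matricially normed space \widehat{M}_n is not an L¹-space: it is not the case that ‖u_1 ⊕ … ⊕ u_k‖ = Σ_{j=1}^k ‖u_j‖ for all matrices u_1, …, u_k with entries in \widehat{M}_n (i.e., \widehat{M}_n fails to be simultaneously 1-convex and 1-concave). -/

import Mathlib

open scoped BigOperators
open Matrix

noncomputable section

/-- Block-diagonal sum `u ⊕ w` of two square matrices with entries in `E`. -/
def MatDSum {E : Type*} [Zero E] {m k : ℕ}
    (u : Matrix (Fin m) (Fin m) E) (w : Matrix (Fin k) (Fin k) E) :
    Matrix (Fin (m + k)) (Fin (m + k)) E :=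
  Matrix.reindex finSumFinEquiv finSumFinEquiv (Matrix.fromBlocks u 0 0 w)

/-- Left action `S·u` of a scalar matrix on an `E`-valued matrix. -/
def scalLeft {E : Type*} [AddCommMonoid E] [Module ℂ E] {m : ℕ}
    (S : Matrix (Fin m) (Fin m) ℂ) (u : Matrix (Fin m) (Fin m) E) :
    Matrix (Fin m) (Fin m) E :=
  Matrix.of fun i j => ∑ k, S i k • u k j

/-- Right action `u·S` of a scalar matrix on an `E`-valued matrix. -/
def scalRight {E : Type*} [AddCommMonoid E] [Module ℂ E] {m : ℕ}
    (u : Matrix (Fin m) (Fin m) E) (S : Matrix (Fin m) (Fin m) ℂ) :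
    Matrix (Fin m) (Fin m) E :=
  Matrix.of fun i j => ∑ k, S k j • u i k

/-- The operator norm `‖S‖_o` of a complex scalar matrix, i.e. its norm as an
operator on the euclidean (Hilbert) space `ℂⁿ`. -/
noncomputable def opNorm {m : ℕ} (S : Matrix (Fin m) (Fin m) ℂ) : ℝ :=
  ‖LinearMap.toContinuousLinearMap (Matrix.toEuclideanLin S)‖

/-- The `m`-th amplification of a map `φ : E → F`: apply `φ` entrywise. -/
def matAmpl {E F : Type*} (φ : E → F) {m : ℕ} (u : Matrix (Fin m) (Fin m) E) :
    Matrix (Fin m) (Fin m) F :=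
  Matrix.of fun i j => φ (u i j)

/-- The operator `φ^v : M_n → E`, `(λ_{ij}) ↦ Σ_{i,j} λ_{ji} • x_{ij}`, associated with
`v = (x_{ij}) ∈ M_n(E)`. -/
def matPhi {E : Type*} [AddCommMonoid E] [Module ℂ E] {n : ℕ}
    (v : Matrix (Fin n) (Fin n) E) (a : Matrix (Fin n) (Fin n) ℂ) : E :=
  ∑ i, ∑ j, a j i • v i j

/-- `ν` is a matrix-norm on the complex vector space `E`: each `ν m` is a norm on
`M_m(E)`, and Axioms 1 and 2 of Effros/Ruan hold. -/
def IsMatrixNorm {E : Type} [AddCommGroup E] [Module ℂ E]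
    (ν : ∀ m : ℕ, Matrix (Fin m) (Fin m) E → ℝ) : Prop :=
  (∀ (m : ℕ) (u v : Matrix (Fin m) (Fin m) E), ν m (u + v) ≤ ν m u + ν m v) ∧
  (∀ (m : ℕ) (c : ℂ) (u : Matrix (Fin m) (Fin m) E), ν m (c • u) = ‖c‖ * ν m u) ∧
  (∀ (m : ℕ) (u : Matrix (Fin m) (Fin m) E), ν m u = 0 ↔ u = 0) ∧
  (∀ (m k : ℕ) (u : Matrix (Fin m) (Fin m) E),
      ν (m + k) (MatDSum u (0 : Matrix (Fin k) (Fin k) E)) = ν m u) ∧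
  (∀ (m : ℕ) (S : Matrix (Fin m) (Fin m) ℂ) (u : Matrix (Fin m) (Fin m) E),
      ν m (scalLeft S u) ≤ opNorm S * ν m u) ∧
  (∀ (m : ℕ) (u : Matrix (Fin m) (Fin m) E) (S : Matrix (Fin m) (Fin m) ℂ),
      ν m (scalRight u S) ≤ ν m u * opNorm S)

/-- The set of values `‖(φ^v)_m(u)‖_m` over all proper couples `(E, v)`, i.e. over all
matricially normed spaces `E` and all `v` in the closed unit ball of `M_n(E)`. -/
def hatNormSet (n : ℕ) {m : ℕ}
    (u : Matrix (Fin m) (Fin m) (Matrix (Fin n) (Fin n) ℂ)) : Set ℝ :=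
  { r | ∃ (E : Type) (_ : AddCommGroup E) (_ : Module ℂ E)
        (ν : ∀ m' : ℕ, Matrix (Fin m') (Fin m') E → ℝ),
        IsMatrixNorm ν ∧
        ∃ v : Matrix (Fin n) (Fin n) E, ν n v ≤ 1 ∧ r = ν m (matAmpl (matPhi v) u) }

/-- The matrix-norm of the matricially normed space `M̂_n`:
`‖u‖_m = sup { ‖(φ^v)_m(u)‖_m : (E, v) a proper couple }`. -/
noncomputable def hatNorm (n : ℕ) {m : ℕ}
    (u : Matrix (Fin m) (Fin m) (Matrix (Fin n) (Fin n) ℂ)) : ℝ :=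
  sSup (hatNormSet n u)

/-- The iterated block-diagonal sum `u 0 ⊕ u 1 ⊕ … ⊕ u (k-1)` of a family of square
matrices with entries in `E` (of possibly different sizes). -/
def dSumFam {E : Type*} [Zero E] :
    ∀ (k : ℕ) (d : Fin k → ℕ),
      (∀ j, Matrix (Fin (d j)) (Fin (d j)) E) →
      Matrix (Fin (∑ j, d j)) (Fin (∑ j, d j)) E
  | 0, _, _ => 0
  | (k + 1), d, u =>
      Matrix.reindex (finCongr (Fin.sum_univ_succ d).symm)
        (finCongr (Fin.sum_univ_succ d).symm)
        (MatDSum (u 0) (dSumFam k (fun j => d j.succ) (fun j => u j.succ)))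

/-!
Take `a = E₀₀` and `b = E₀₁` in `M_n`, as `1 × 1` matrices over `M̂_n`. Since `φ^v(E_pq) = v_qp`
is an entry of `v`, compressing `v` by matrix units gives `‖a‖, ‖b‖ ≤ 1`, and the couple
`(ℂ, E_qp)`, with `ℂ` carrying the operator norm, shows `‖a‖ = ‖b‖ = 1`. On the other hand
`(φ^v)₂(a ⊕ b) = diag(v₀₀, v₁₀)`, and with `P_± = diag(1, ±1, 0, …)`, `B_± = E₀₀ ± E₀₁`,
`2 diag(v₀₀, v₁₀) ⊕ 0 = P₊ v B₊ + P₋ v B₋`, where `‖P_±‖ ≤ 1` and `‖B_±‖ = √2`.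
Hence `‖a ⊕ b‖ ≤ √2 < 2 = ‖a‖ + ‖b‖`.
-/

open scoped Matrix.Norms.L2Operator

section L2OpNorm

variable {𝕜 : Type*} [RCLike 𝕜] {m n : Type*} [Fintype m] [DecidableEq m] [Fintype n]
  [DecidableEq n]

lemma Matrix.l2_opNorm_one_le : ‖(1 : Matrix m m 𝕜)‖ ≤ 1 := by
  rw [← diagonal_one, l2_opNorm_diagonal]
  exact (pi_norm_const_le (1 : 𝕜)).trans norm_one.le

lemma Matrix.l2_opNorm_le_one_of_mul_conjTranspose_eq_one {J : Matrix m n 𝕜} (hJ : J * Jᴴ = 1) :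
    ‖J‖ ≤ 1 := by
  have hsq : ‖J‖ * ‖J‖ ≤ 1 := by
    rw [← l2_opNorm_conjTranspose J, ← l2_opNorm_conjTranspose_mul_self,
      conjTranspose_conjTranspose, hJ]
    exact l2_opNorm_one_le
  nlinarith [norm_nonneg J]

lemma Matrix.l2_opNorm_conjTranspose_mul_mul_of_mul_conjTranspose_eq_one {J : Matrix m n 𝕜}
    (hJ : J * Jᴴ = 1) (u : Matrix m m 𝕜) : ‖Jᴴ * u * J‖ = ‖u‖ := by
  have hJ₁ := l2_opNorm_le_one_of_mul_conjTranspose_eq_one hJ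
  have hJ₂ : ‖Jᴴ‖ ≤ 1 := (l2_opNorm_conjTranspose J).trans_le hJ₁
  have hu : u = J * (Jᴴ * u * J) * Jᴴ := by
    simp only [Matrix.mul_assoc, hJ, Matrix.mul_one]
    rw [← Matrix.mul_assoc, hJ, Matrix.one_mul]
  refine le_antisymm ?_ ?_
  · calc ‖Jᴴ * u * J‖ ≤ ‖Jᴴ‖ * ‖u‖ * ‖J‖ :=
          (l2_opNorm_mul _ _).trans (by gcongr; exact l2_opNorm_mul _ _)
      _ ≤ 1 * ‖u‖ * 1 := by gcongr
      _ = ‖u‖ := by ring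
  · calc ‖u‖ = ‖J * (Jᴴ * u * J) * Jᴴ‖ := by rw [← hu]
      _ ≤ ‖J‖ * ‖Jᴴ * u * J‖ * ‖Jᴴ‖ :=
          (l2_opNorm_mul _ _).trans (by gcongr; exact l2_opNorm_mul _ _)
      _ ≤ 1 * ‖Jᴴ * u * J‖ * 1 := by gcongr
      _ = ‖Jᴴ * u * J‖ := by ring

lemma Matrix.l2_opNorm_sq_of_mul_conjTranspose_eq_single {A : Matrix m n 𝕜} {a : m} {r : ℝ}
    (hr : 0 ≤ r) (h : A * Aᴴ = single a a (r : 𝕜)) : ‖A‖ ^ 2 = r := by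
  rw [← l2_opNorm_conjTranspose, sq, ← l2_opNorm_conjTranspose_mul_self,
    conjTranspose_conjTranspose, h, ← diagonal_single, l2_opNorm_diagonal, Pi.norm_single,
    RCLike.norm_ofReal, abs_of_nonneg hr]

lemma Matrix.l2_opNorm_single (a : m) (b : n) (c : 𝕜) : ‖single a b c‖ = ‖c‖ := by
  refine (pow_left_inj₀ (norm_nonneg _) (norm_nonneg _) two_ne_zero).1
    (l2_opNorm_sq_of_mul_conjTranspose_eq_single (a := a) (sq_nonneg _) ?_)
  rw [conjTranspose_single, single_mul_single_same, RCLike.star_def, RCLike.mul_conj,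
    RCLike.ofReal_pow]

lemma Matrix.l2_opNorm_single_add_single (a : m) {b b' : n} (hb : b ≠ b') (c c' : 𝕜) :
    ‖single a b c + single a b' c'‖ = √(‖c‖ ^ 2 + ‖c'‖ ^ 2) := by
  rw [eq_comm, Real.sqrt_eq_iff_eq_sq (by positivity) (norm_nonneg _),
    l2_opNorm_sq_of_mul_conjTranspose_eq_single (a := a) (r := ‖c‖ ^ 2 + ‖c'‖ ^ 2)
      (by positivity)]
  simp [conjTranspose_single, Matrix.add_mul, Matrix.mul_add, hb, hb.symm, RCLike.mul_conj,
    ← single_add]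

end L2OpNorm

lemma opNorm_eq_l2_opNorm {m : ℕ} (S : Matrix (Fin m) (Fin m) ℂ) : opNorm S = ‖S‖ := rfl

lemma Fin.castAdd_ne_natAdd {m k : ℕ} (a : Fin m) (b : Fin k) :
    Fin.castAdd k a ≠ Fin.natAdd m b :=
  Fin.ne_of_lt (by rw [Fin.lt_def, Fin.val_castAdd, Fin.val_natAdd]; omega)

section BlockSum

variable {E : Type*} {m k : ℕ}

lemma MatDSum_add [AddZeroClass E] (u u' : Matrix (Fin m) (Fin m) E)
    (w w' : Matrix (Fin k) (Fin k) E) :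
    MatDSum (u + u') (w + w') = MatDSum u w + MatDSum u' w' := by
  ext i j
  induction i using Fin.addCases <;> induction j using Fin.addCases <;> simp [MatDSum]

lemma MatDSum_single_zero [Zero E] (a b : Fin m) (x : E) :
    MatDSum (single a b x) (0 : Matrix (Fin k) (Fin k) E) =
      single (Fin.castAdd k a) (Fin.castAdd k b) x := by
  ext i j
  induction i using Fin.addCases <;> induction j using Fin.addCases <;>
    simp [MatDSum, single_apply, Fin.castAdd_ne_natAdd]

lemma l2_opNorm_MatDSum_zero {𝕜 : Type*} [RCLike 𝕜] (u : Matrix (Fin m) (Fin m) 𝕜) :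
    ‖MatDSum u (0 : Matrix (Fin k) (Fin k) 𝕜)‖ = ‖u‖ := by
  let J : Matrix (Fin m) (Fin (m + k)) 𝕜 := (1 : Matrix _ _ 𝕜).submatrix (Fin.castAdd k) id
  have hJ : J * Jᴴ = 1 := by
    ext i j
    simp [J, mul_apply, one_apply]
  have hu : MatDSum u 0 = Jᴴ * u * J := by
    ext i j
    induction i using Fin.addCases <;> induction j using Fin.addCases <;>
      simp [MatDSum, J, mul_apply, one_apply, Fin.castAdd_ne_natAdd,
        (Fin.castAdd_ne_natAdd _ _).symm]
  rw [hu, l2_opNorm_conjTranspose_mul_mul_of_mul_conjTranspose_eq_one hJ]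

end BlockSum

lemma Matrix.of_singleton_eq_single {α : Type*} [Zero α] (x : α) : !![x] = single 0 0 x := by
  ext i j
  fin_cases i; fin_cases j
  rfl

lemma Matrix.of_diag_eq_single_add_single {α : Type*} [AddZeroClass α] (x y : α) :
    !![x, 0; 0, y] = single 0 0 x + single 1 1 y := by
  ext i j
  fin_cases i <;> fin_cases j <;> simp

section ScalarActions

variable {E : Type*} [AddCommGroup E] [Module ℂ E] {n : ℕ}

@[simp] lemma scalLeft_apply (S : Matrix (Fin n) (Fin n) ℂ) (u : Matrix (Fin n) (Fin n) E)
    (i j : Fin n) : scalLeft S u i j = ∑ k, S i k • u k j := rfl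

@[simp] lemma scalRight_apply (u : Matrix (Fin n) (Fin n) E) (S : Matrix (Fin n) (Fin n) ℂ)
    (i j : Fin n) : scalRight u S i j = ∑ k, S k j • u i k := rfl

lemma scalLeft_eq_mul (S u : Matrix (Fin n) (Fin n) ℂ) : scalLeft S u = S * u := by
  ext i j
  simp [mul_apply]

lemma scalRight_eq_mul (u S : Matrix (Fin n) (Fin n) ℂ) : scalRight u S = u * S := by
  ext i j
  simp [mul_apply, mul_comm]

lemma scalLeft_single_scalRight_single (v : Matrix (Fin n) (Fin n) E) (a p q : Fin n) :
    scalLeft (single a p 1) (scalRight v (single q a 1)) = single a a (v p q) := by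
  ext i j
  simp only [scalLeft_apply, scalRight_apply, single_apply, ite_smul, ite_and]
  simp

lemma two_smul_single_add_single (v : Matrix (Fin n) (Fin n) E) {i₀ i₁ : Fin n} (h : i₀ ≠ i₁)
    (j : Fin n) :
    (2 : ℂ) • (single i₀ i₀ (v i₀ j) + single i₁ i₁ (v i₁ j)) =
      scalLeft (diagonal (Pi.single i₀ 1 + Pi.single i₁ 1))
          (scalRight v (single j i₀ 1 + single j i₁ 1)) +
        scalLeft (diagonal (Pi.single i₀ 1 + Pi.single i₁ (-1)))
          (scalRight v (single j i₀ 1 + single j i₁ (-1))) := by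
  ext a b
  simp only [Matrix.smul_apply, Matrix.add_apply, single_apply, ite_and, smul_add, smul_ite,
    smul_zero, scalLeft_apply, diagonal_apply, Pi.add_apply, Pi.single_apply, scalRight_apply,
    add_smul, ite_smul, one_smul, zero_smul, Finset.sum_add_distrib, Finset.sum_ite_eq,
    Finset.mem_univ, ↓reduceIte, Finset.sum_ite_irrel, Finset.sum_const_zero, neg_smul, smul_neg,
    Finset.sum_neg_distrib, neg_add_rev]
  split_ifs <;> subst_vars <;> simp_all [two_smul]

end ScalarActions

theorem isMatrixNorm_l2_opNorm : IsMatrixNorm fun m (u : Matrix (Fin m) (Fin m) ℂ) ↦ ‖u‖ :=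
  ⟨fun _ ↦ norm_add_le, fun _ ↦ norm_smul, fun _ _ ↦ norm_eq_zero,
    fun _ _ ↦ l2_opNorm_MatDSum_zero,
    fun _ S u ↦ by rw [scalLeft_eq_mul, opNorm_eq_l2_opNorm]; exact l2_opNorm_mul S u,
    fun _ u S ↦ by rw [scalRight_eq_mul, opNorm_eq_l2_opNorm]; exact l2_opNorm_mul u S⟩

namespace IsMatrixNorm

variable {E : Type} [AddCommGroup E] [Module ℂ E] {ν : ∀ m : ℕ, Matrix (Fin m) (Fin m) E → ℝ}

lemma nonneg (hν : IsMatrixNorm ν) {m : ℕ} (u : Matrix (Fin m) (Fin m) E) : 0 ≤ ν m u := by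
  obtain ⟨hadd, hsmul, hzero, -, -, -⟩ := hν
  have h := hadd m u (-u)
  rw [add_neg_cancel, (hzero m 0).2 rfl, ← neg_one_smul ℂ u, hsmul, norm_neg, norm_one,
    one_mul] at h
  linarith

lemma scalLeft_scalRight_le (hν : IsMatrixNorm ν) {m : ℕ} (S T : Matrix (Fin m) (Fin m) ℂ)
    (u : Matrix (Fin m) (Fin m) E) :
    ν m (scalLeft S (scalRight u T)) ≤ ‖S‖ * ‖T‖ * ν m u := by
  obtain ⟨-, -, -, -, hleft, hright⟩ := hν
  simp only [opNorm_eq_l2_opNorm] at hleft hright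
  calc ν m (scalLeft S (scalRight u T)) ≤ ‖S‖ * ν m (scalRight u T) := hleft m S _
    _ ≤ ‖S‖ * (ν m u * ‖T‖) := by gcongr; exact hright m u T
    _ = ‖S‖ * ‖T‖ * ν m u := by ring

lemma map_entry_le (hν : IsMatrixNorm ν) {n : ℕ} (v : Matrix (Fin n) (Fin n) E) (p q : Fin n) :
    ν 1 !![v p q] ≤ ν n v := by
  obtain ⟨k, rfl⟩ : ∃ k, n = 1 + k := ⟨n - 1, by have := p.pos; omega⟩
  have ⟨_, _, _, hdsum, _, _⟩ := hν
  let i₀ : Fin (1 + k) := Fin.castAdd k 0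
  calc ν 1 !![v p q] = ν (1 + k) (MatDSum !![v p q] 0) := (hdsum 1 k _).symm
    _ = ν (1 + k) (scalLeft (single i₀ p 1) (scalRight v (single q i₀ 1))) := by
        rw [scalLeft_single_scalRight_single, Matrix.of_singleton_eq_single, MatDSum_single_zero]
    _ ≤ ‖(single i₀ p 1 : Matrix _ _ ℂ)‖ * ‖(single q i₀ 1 : Matrix _ _ ℂ)‖ * ν (1 + k) v :=
        hν.scalLeft_scalRight_le _ _ _
    _ = ν (1 + k) v := by simp [l2_opNorm_single]

lemma map_single_add_single_le (hν : IsMatrixNorm ν) {n : ℕ} (v : Matrix (Fin n) (Fin n) E)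
    {i₀ i₁ : Fin n} (h : i₀ ≠ i₁) (j : Fin n) :
    ν n (single i₀ i₀ (v i₀ j) + single i₁ i₁ (v i₁ j)) ≤ √2 * ν n v := by
  have hdiag : ∀ c : ℂ, ‖c‖ = 1 →
      ‖(diagonal (Pi.single i₀ 1 + Pi.single i₁ c) : Matrix (Fin n) (Fin n) ℂ)‖ ≤ 1 := by
    intro c hc
    rw [l2_opNorm_diagonal]
    refine (pi_norm_le_iff_of_nonneg zero_le_one).2 fun i ↦ ?_
    by_cases h₀ : i = i₀ <;> by_cases h₁ : i = i₁ <;> simp_all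
  have hrow : ∀ c : ℂ, ‖c‖ = 1 →
      ‖(single j i₀ 1 + single j i₁ c : Matrix (Fin n) (Fin n) ℂ)‖ = √2 := by
    intro c hc
    rw [l2_opNorm_single_add_single _ h, norm_one, hc]
    norm_num
  have hsandwich : ∀ c : ℂ, ‖c‖ = 1 →
      ν n (scalLeft (diagonal (Pi.single i₀ 1 + Pi.single i₁ c))
        (scalRight v (single j i₀ 1 + single j i₁ c))) ≤ √2 * ν n v := by
    intro c hc
    refine (hν.scalLeft_scalRight_le _ _ v).trans ?_
    rw [hrow c hc, mul_assoc]
    exact mul_le_of_le_one_left (by have := hν.nonneg v; positivity) (hdiag c hc)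
  have ⟨hadd, hsmul, _, _, _, _⟩ := hν
  have hsum := (hadd n _ _).trans (add_le_add (hsandwich 1 norm_one) (hsandwich (-1) (by simp)))
  rw [← two_smul_single_add_single v h j, hsmul, Complex.norm_two] at hsum
  linarith

lemma map_diag_le (hν : IsMatrixNorm ν) {k : ℕ} (v : Matrix (Fin (2 + k)) (Fin (2 + k)) E)
    (j : Fin (2 + k)) :
    ν 2 !![v (Fin.castAdd k 0) j, 0; 0, v (Fin.castAdd k 1) j] ≤ √2 * ν (2 + k) v := by
  have ⟨_, _, _, hdsum, _, _⟩ := hν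
  rw [← hdsum 2 k, Matrix.of_diag_eq_single_add_single,
    ← add_zero (0 : Matrix (Fin k) (Fin k) E), MatDSum_add, MatDSum_single_zero,
    MatDSum_single_zero]
  exact hν.map_single_add_single_le v (by simp [Fin.ext_iff]) j

end IsMatrixNorm

section HatNorm

variable {n : ℕ}

lemma matPhi_single {E : Type*} [AddCommGroup E] [Module ℂ E] (v : Matrix (Fin n) (Fin n) E)
    (p q : Fin n) (c : ℂ) : matPhi v (single p q c) = c • v q p := by
  simp [matPhi, single_apply, ite_smul, ite_and]

lemma matPhi_zero {E : Type*} [AddCommGroup E] [Module ℂ E] (v : Matrix (Fin n) (Fin n) E) :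
    matPhi v 0 = 0 := by
  simp [matPhi]

lemma mem_upperBounds_hatNormSet {m : ℕ} {u : Matrix (Fin m) (Fin m) (Matrix (Fin n) (Fin n) ℂ)}
    {c : ℝ} :
    c ∈ upperBounds (hatNormSet n u) ↔
      ∀ (E : Type) [AddCommGroup E] [Module ℂ E] (ν : ∀ m : ℕ, Matrix (Fin m) (Fin m) E → ℝ),
        IsMatrixNorm ν → ∀ v : Matrix (Fin n) (Fin n) E, ν n v ≤ 1 →
          ν m (matAmpl (matPhi v) u) ≤ c := by
  constructor
  · intro h E _ _ ν hν v hv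
    exact h ⟨E, _, _, ν, hν, v, hv, rfl⟩
  · rintro h r ⟨E, _, _, ν, hν, v, hv, rfl⟩
    exact h E ν hν v hv

lemma hatNorm_single (p q : Fin n) : hatNorm n !![single p q (1 : ℂ)] = 1 := by
  have hampl : ∀ {E : Type} [AddCommGroup E] [Module ℂ E] (v : Matrix (Fin n) (Fin n) E),
      matAmpl (matPhi v) !![single p q (1 : ℂ)] = !![v q p] := by
    intro E _ _ v
    ext i j
    fin_cases i; fin_cases j
    simp [matAmpl, matPhi_single]
  have hbound : (1 : ℝ) ∈ upperBounds (hatNormSet n !![single p q (1 : ℂ)]) :=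
    mem_upperBounds_hatNormSet.2 fun E _ _ ν hν v hv ↦ by
      rw [hampl]
      exact (hν.map_entry_le v q p).trans hv
  refine le_antisymm (Real.sSup_le hbound zero_le_one) (le_csSup ⟨1, hbound⟩ ?_)
  refine ⟨ℂ, _, _, fun m u ↦ ‖u‖, isMatrixNorm_l2_opNorm, single q p 1, ?_, ?_⟩
  · simp [l2_opNorm_single]
  · dsimp only
    rw [hampl, single_apply_same, Matrix.of_singleton_eq_single, l2_opNorm_single, norm_one]

lemma hatNorm_diag_single_le (k : ℕ) :
    hatNorm (2 + k) !![single (Fin.castAdd k 0) (Fin.castAdd k 0) (1 : ℂ), 0;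
      0, single (Fin.castAdd k 0) (Fin.castAdd k 1) 1] ≤ √2 := by
  refine Real.sSup_le (mem_upperBounds_hatNormSet.2 fun E _ _ ν hν v hv ↦ ?_) (Real.sqrt_nonneg 2)
  have hampl : matAmpl (matPhi v) !![single (Fin.castAdd k 0) (Fin.castAdd k 0) (1 : ℂ), 0;
      0, single (Fin.castAdd k 0) (Fin.castAdd k 1) 1] =
      !![v (Fin.castAdd k 0) (Fin.castAdd k 0), 0; 0, v (Fin.castAdd k 1) (Fin.castAdd k 0)] := by
    ext i j
    fin_cases i <;> fin_cases j <;> simp [matAmpl, matPhi_single, matPhi_zero]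
  rw [hampl]
  calc _ ≤ √2 * ν (2 + k) v := hν.map_diag_le v _
    _ ≤ √2 := mul_le_of_le_one_right (Real.sqrt_nonneg 2) hv

end HatNorm

lemma dSumFam_two_singleton {E : Type*} [Zero E] (x y : E) :
    dSumFam 2 (fun _ ↦ 1) ![!![x], !![y]] = !![x, 0; 0, y] := by
  ext i j
  fin_cases i <;> fin_cases j <;> rfl

/-- **Proposition 14.** For `n > 1`, the matricially normed space `M̂_n` is not an
`L¹`-space: it is not the case that `‖u_1 ⊕ … ⊕ u_k‖ = Σ_j ‖u_j‖` for all matrices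
`u_1, …, u_k` with entries in `M̂_n` (i.e. `M̂_n` fails to be simultaneously `1`-convex
and `1`-concave). -/
theorem hatMn_not_L1 (n : ℕ) (hn : 1 < n) :
    ¬ ∀ (k : ℕ) (d : Fin k → ℕ)
        (u : ∀ j, Matrix (Fin (d j)) (Fin (d j)) (Matrix (Fin n) (Fin n) ℂ)),
        hatNorm n (dSumFam k d u) = ∑ j, hatNorm n (u j) := by
  intro hL1
  obtain ⟨k, rfl⟩ : ∃ k, n = 2 + k := ⟨n - 2, by omega⟩
  have h := hL1 2 (fun _ ↦ 1) ![!![single (Fin.castAdd k 0) (Fin.castAdd k 0) (1 : ℂ)],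
    !![single (Fin.castAdd k 0) (Fin.castAdd k 1) 1]]
  rw [dSumFam_two_singleton] at h
  simp only [Fin.sum_univ_two, Matrix.cons_val_zero, Matrix.cons_val_one, hatNorm_single] at h
  have hle := h ▸ hatNorm_diag_single_le k
  have hsqrt : √2 < 2 := by
    rw [Real.sqrt_lt' two_pos]; norm_num
  linarith
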